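/- Let I and X be compact metric spaces, {f_t}_{t∈I} a near-isotopy of X with fat map F on Z = X×I, and let F̄ denote the closure in C(lim(Z,F), Z) (uniform metric) of the set E = {H∘π_k : H a slice-preserving homeomorphism of Z, k ∈ ℕ}. Then: (i) every α ∈ F̄ is surjective and satisfies α(ι_t(lim(X,f_t))) = X×{t} for all t ∈ I; (ii) for every δ > 0, the set of δ-maps in F̄ is open and dense in F̄; (iii) injective maps are dense in F̄. -/

import Mathlib

/-- The inverse limit `lim(X,f) = {x ∈ X^ℕ : f (x (i+1)) = x i}`. -/
def InvLim {X : Type*} (f : X → X) : Set (ℕ → X) :=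
  {x | ∀ i, f (x (i + 1)) = x i}

/-- The metric `d_∞(x,y) = max_i min(d(x_i,y_i),1)/(i+1)` on `X^ℕ`. -/
noncomputable def dInfty {X : Type*} [MetricSpace X] (x y : ℕ → X) : ℝ :=
  ⨆ i : ℕ, min (dist (x i) (y i)) 1 / (i + 1 : ℝ)

/-- The embedding `ι_t : lim(X,f_t) → lim(X×I, F)`, `ι_t(x₀,x₁,…) = ((x₀,t),(x₁,t),…)`,
where `F(x,t) = (f (x,t), t)` is the fat map of the family `f`. -/
def iota {X I : Type*} (f : X × I → X) (t : I)
    (x : InvLim (fun x => f (x, t))) :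
    InvLim (fun p : X × I => (f p, p.2)) :=
  ⟨fun i => (x.val i, t), fun i => congrArg (fun a => (a, t)) (x.property i)⟩

/-!
Every map in `E` has the form `H ∘ π_k` with `H` a slice-preserving homeomorphism. Each `f_t`
is a uniform limit of homeomorphisms of a compact space, hence surjective, so `π_k` maps
`ι_t(lim(X,f_t))` onto `X × {t}`, and `H` preserves `X × {t}`; mapping a compact set onto a
closed set survives uniform limits, which gives (i).

Since `F` is a uniform limit of slice-preserving homeomorphisms, the map
`H ∘ π_k = H ∘ F^N ∘ π_(k+N)` is approximated by `P ∘ π_(k+N)` with `P` a slice-preserving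
homeomorphism. As `z_(k+N)` determines `z_0, …, z_(k+N)`, such a map is a `δ`-map as soon as
`1/(k+N+2) < δ`. Being a `δ`-map is an open condition because `lim(Z,F)` is compact, and the
Baire category theorem in the complete space `F̄` makes the maps that are `1/(n+1)`-maps for
every `n`, i.e. the injective maps, dense.
-/

open Set Filter Topology

lemma continuous_iSup_of_le_of_tendsto_zero {T : Type*} [TopologicalSpace T] {g : ℕ → T → ℝ}
    {b : ℕ → ℝ} (hg : ∀ i, Continuous (g i)) (hg0 : ∀ i y, 0 ≤ g i y)
    (hgb : ∀ i y, g i y ≤ b i) (hb : Tendsto b atTop (𝓝 0)) :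
    Continuous fun y => ⨆ i, g i y := by
  obtain ⟨B, hB⟩ := hb.bddAbove_range
  have hbdd (y : T) : BddAbove (range fun i => g i y) :=
    ⟨B, forall_mem_range.2 fun i => (hgb i y).trans (hB ⟨i, rfl⟩)⟩
  refine TendstoUniformly.continuous (F := fun N y =>
      (Finset.range (N + 1)).sup' Finset.nonempty_range_add_one (g · y)) ?_
    (Eventually.of_forall (f := atTop) fun N =>
      Continuous.finset_sup'_apply _ fun i _ => hg i).frequently
  rw [Metric.tendstoUniformly_iff]
  intro ε hε
  filter_upwards [eventually_forall_ge_atTop.2 (hb.eventually (gt_mem_nhds (half_pos hε)))]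
    with N hN y
  set G := (Finset.range (N + 1)).sup' Finset.nonempty_range_add_one (g · y)
  have hG0 : 0 ≤ G := (hg0 0 y).trans (Finset.le_sup' (g · y) (by simp))
  have hGle : G ≤ ⨆ i, g i y := Finset.sup'_le _ _ fun i _ => le_ciSup (hbdd y) i
  have hleG : ⨆ i, g i y ≤ G + ε / 2 := ciSup_le fun i => by
    rcases le_or_gt i N with hi | hi
    · linarith [Finset.le_sup' (g · y) (Finset.mem_range_succ_iff.2 hi)]
    · linarith [hgb i y, hN i hi.le]
  rw [Real.dist_eq, abs_of_nonneg (sub_nonneg.2 hGle)]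
  linarith

section DInfty

variable {Y : Type*} [MetricSpace Y]

lemma bddAbove_range_dInfty (z w : ℕ → Y) :
    BddAbove (range fun i : ℕ => min (dist (z i) (w i)) 1 / (i + 1 : ℝ)) :=
  ⟨1, forall_mem_range.2 fun i =>
    div_le_one_of_le₀ ((min_le_right _ _).trans (by linarith [i.cast_nonneg (α := ℝ)]))
      (by positivity)⟩

lemma dInfty_pos_of_ne {z w : ℕ → Y} (h : z ≠ w) : 0 < dInfty z w := by
  obtain ⟨j, hj⟩ := Function.ne_iff.1 h
  exact (div_pos (lt_min (dist_pos.2 hj) one_pos) (by positivity)).trans_le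
    (le_ciSup (bddAbove_range_dInfty z w) j)

lemma dInfty_le_of_forall_le_eq {z w : ℕ → Y} {m : ℕ} (h : ∀ i ≤ m, z i = w i) :
    dInfty z w ≤ 1 / (m + 2 : ℝ) := by
  refine ciSup_le fun i => ?_
  rcases le_or_gt i m with hi | hi
  · rw [h i hi, dist_self, min_eq_left zero_le_one, zero_div]
    positivity
  · have : (m : ℝ) + 2 ≤ i + 1 := by norm_cast; omega
    exact div_le_div₀ zero_le_one (min_le_right _ _) (by positivity) this

lemma continuous_dInfty : Continuous fun p : (ℕ → Y) × (ℕ → Y) => dInfty p.1 p.2 :=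
  continuous_iSup_of_le_of_tendsto_zero
    (fun i => ((continuous_apply i).fst'.dist (continuous_apply i).snd').min continuous_const
      |>.div_const _)
    (fun i p => by positivity)
    (fun i p => div_le_div_of_nonneg_right (min_le_right _ _) (by positivity))
    tendsto_one_div_add_atTop_nhds_zero_nat

end DInfty

namespace InvLim

variable {A : Type*} {g : A → A}

lemma apply_eq_iterate (z : InvLim g) (i j : ℕ) : z.val i = g^[j] (z.val (i + j)) := by
  induction j with
  | zero => rfl
  | succ j ih => rw [ih, Function.iterate_succ_apply, ← Nat.add_assoc, z.property]

lemma eq_of_apply_eq {z w : InvLim g} {m : ℕ} (h : z.val m = w.val m) {i : ℕ} (hi : i ≤ m) :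
    z.val i = w.val i := by
  rw [apply_eq_iterate z i (m - i), apply_eq_iterate w i (m - i), Nat.add_sub_cancel' hi, h]

lemma surjective_eval (hg : Function.Surjective g) (k : ℕ) :
    Function.Surjective fun z : InvLim g => z.val k := by
  intro a
  obtain ⟨c, hc⟩ := hg.hasRightInverse
  -- the thread `i ↦ g^[k] (c^[i] a)` built from a section `c` of `g` passes through `a` at `k`
  refine ⟨⟨fun i => g^[k] (c^[i] a), fun i => ?_⟩, hc.iterate k a⟩
  rw [← Function.iterate_succ_apply' g, Function.iterate_succ_apply,
    Function.iterate_succ_apply', hc]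

lemma isClosed [TopologicalSpace A] [T2Space A] (hg : Continuous g) : IsClosed (InvLim g) := by
  rw [InvLim, ofPred_forall]
  exact isClosed_iInter fun i =>
    isClosed_eq (hg.comp (continuous_apply (i + 1))) (continuous_apply i)

lemma compactSpace [TopologicalSpace A] [CompactSpace A] [T2Space A] (hg : Continuous g) :
    CompactSpace (InvLim g) :=
  isCompact_iff_compactSpace.1 (isClosed hg).isCompact

end InvLim

namespace ContinuousMap

variable {L B : Type*} [TopologicalSpace L] [TopologicalSpace B]

lemma image_eq_of_mem_closure [T1Space B] {s : Set C(L, B)} {α : C(L, B)} (hα : α ∈ closure s)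
    {K : Set L} (hK : IsCompact K) {T : Set B} (hT : IsClosed T) (h : ∀ β ∈ s, β '' K = T) :
    α '' K = T := by
  refine (image_subset_iff.2 fun x hx => ?_).antisymm fun y hy => ?_
  · exact hT.closure_subset <| map_mem_closure (f := fun β : C(L, B) => β x)
      (continuous_eval_const x) hα fun β hβ => by rw [← h β hβ]; exact mem_image_of_mem β hx
  · by_contra hy'
    obtain ⟨β, hβK, hβ⟩ := mem_closure_iff.1 hα _
      (isOpen_setOfPred_mapsTo hK isOpen_compl_singleton) fun x hx hxy => hy' ⟨x, hx, hxy⟩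
    obtain ⟨x, hx, hxy⟩ := (h β hβ).symm ▸ hy
    exact hβK hx hxy

lemma isOpen_setOf_forall_apply_eq_imp_lt [CompactSpace L] [T2Space B] {ρ : L → L → ℝ}
    (hρ : Continuous fun p : L × L => ρ p.1 p.2) (δ : ℝ) :
    IsOpen {α : C(L, B) | ∀ z w, α z = α w → ρ z w < δ} := by
  rw [isOpen_iff_eventually]
  intro α₀ hα₀
  suffices ∀ p : L × L, ∀ᶠ q : C(L, B) × (L × L) in 𝓝 (α₀, p),
      q.1 q.2.1 = q.1 q.2.2 → ρ q.2.1 q.2.2 < δ by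
    filter_upwards [isCompact_univ.eventually_forall_of_forall_eventually
      (P := fun α (p : L × L) => α p.1 = α p.2 → ρ p.1 p.2 < δ) fun p _ => this p]
      with α hα z w using hα (z, w) trivial
  intro p
  by_cases hp : α₀ p.1 = α₀ p.2
  · filter_upwards [(hρ.comp continuous_snd).continuousAt.eventually_lt continuousAt_const
      (hα₀ _ _ hp)] with q hq _ using hq
  · have hev (i : L × L → L) (hi : Continuous i) :
        Continuous fun q : C(L, B) × (L × L) => q.1 (i q.2) := by fun_prop
    filter_upwards [((hev _ continuous_fst).continuousAt.ne_iff_eventually_ne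
      (hev _ continuous_snd).continuousAt).1 hp] with q hq h using absurd h hq

end ContinuousMap

lemma dense_setOf_mem_of_subset_closure_inter {T : Type*} [TopologicalSpace T] {E D : Set T}
    (h : E ⊆ closure (E ∩ D)) : Dense {x : closure E | x.1 ∈ D} := by
  rw [Subtype.dense_iff]
  refine closure_minimal (h.trans (closure_mono ?_)) isClosed_closure
  rintro x ⟨hxE, hxD⟩
  exact ⟨⟨x, subset_closure hxE⟩, hxD, rfl⟩

lemma surjective_of_forall_dist_lt {Y B : Type*} [TopologicalSpace Y] [CompactSpace Y]
    [MetricSpace B] {g : Y → B} (hg : Continuous g)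
    (h : ∀ ε > 0, ∃ e : Y → B, Function.Surjective e ∧ ∀ y, dist (e y) (g y) < ε) :
    Function.Surjective g := by
  intro b
  suffices b ∈ closure (range g) by rwa [(isCompact_range hg).isClosed.closure_eq] at this
  refine Metric.mem_closure_iff.2 fun ε hε => ?_
  obtain ⟨e, he, hdist⟩ := h ε hε
  obtain ⟨y, rfl⟩ := he b
  exact ⟨g y, mem_range_self y, hdist y⟩

section DeltaMaps

variable {Y : Type*} [MetricSpace Y] {L : Set (ℕ → Y)} {B : Type*} [TopologicalSpace B]

variable (L B) in
def deltaMaps (δ : ℝ) : Set C(L, B) :=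
  {α | ∀ z w : L, α z = α w → dInfty z.val w.val < δ}

lemma isOpen_deltaMaps [CompactSpace L] [T2Space B] (δ : ℝ) : IsOpen (deltaMaps L B δ) :=
  ContinuousMap.isOpen_setOf_forall_apply_eq_imp_lt (ρ := fun z w : L => dInfty z.val w.val)
    (continuous_dInfty.comp (continuous_subtype_val.prodMap continuous_subtype_val)) δ

lemma injective_of_forall_mem_deltaMaps {α : C(L, B)}
    (h : ∀ n : ℕ, α ∈ deltaMaps L B (1 / (n + 1 : ℝ))) : Function.Injective α := by
  intro z w hzw
  by_contra hne
  obtain ⟨n, hn⟩ := exists_nat_one_div_lt (dInfty_pos_of_ne (Subtype.val_injective.ne hne))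
  exact (h n z w hzw).not_gt hn

end DeltaMaps

/-- The set `E` of the paper, for homeomorphisms taken from `S`. -/
def homeoProjMaps {Z : Type*} [TopologicalSpace Z] (F : Z → Z) (S : Subsemigroup (Z ≃ₜ Z)) :
    Set C(InvLim F, Z) :=
  {α | ∃ (H : Z ≃ₜ Z) (k : ℕ), H ∈ S ∧ ∀ z : InvLim F, α z = H (z.val k)}

section Approximation

variable {Z : Type*} [MetricSpace Z] [CompactSpace Z] {S : Subsemigroup (Z ≃ₜ Z)} {F : Z → Z}

lemma exists_mem_dist_comp_iterate_lt (hF : ∀ ε > 0, ∃ G ∈ S, ∀ p, dist (G p) (F p) < ε)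
    {H : Z ≃ₜ Z} (hH : H ∈ S) (n : ℕ) {ε : ℝ} (hε : 0 < ε) :
    ∃ P ∈ S, ∀ p, dist (P p) (H (F^[n] p)) < ε := by
  induction n generalizing ε with
  | zero => exact ⟨H, hH, fun p => by simpa using hε⟩
  | succ n ih =>
    obtain ⟨P, hPS, hP⟩ := ih (half_pos hε)
    obtain ⟨η, hη, hPη⟩ := Metric.uniformContinuous_iff.1
      (CompactSpace.uniformContinuous_of_continuous P.continuous) _ (half_pos hε)
    obtain ⟨G, hGS, hG⟩ := hF η hη
    refine ⟨P * G, S.mul_mem hPS hGS, fun p => ?_⟩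
    calc dist (P (G p)) (H (F^[n + 1] p))
        ≤ dist (P (G p)) (P (F p)) + dist (P (F p)) (H (F^[n] (F p))) := dist_triangle _ _ _
      _ < ε / 2 + ε / 2 := add_lt_add (hPη (hG p)) (hP (F p))
      _ = ε := add_halves ε

lemma exists_mem_dist_lt_and_dInfty_lt (hF : ∀ ε > 0, ∃ G ∈ S, ∀ p, dist (G p) (F p) < ε)
    {H : Z ≃ₜ Z} (hH : H ∈ S) (k : ℕ) {ε δ : ℝ} (hε : 0 < ε) (hδ : 0 < δ) :
    ∃ P ∈ S, ∃ m, (∀ z : InvLim F, dist (P (z.val m)) (H (z.val k)) < ε) ∧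
      ∀ z w : InvLim F, P (z.val m) = P (w.val m) → dInfty z.val w.val < δ := by
  obtain ⟨N, hN⟩ := exists_nat_one_div_lt hδ
  obtain ⟨P, hPS, hP⟩ := exists_mem_dist_comp_iterate_lt hF hH N hε
  refine ⟨P, hPS, k + N, fun z => ?_, fun z w hzw => ?_⟩
  · rw [InvLim.apply_eq_iterate z k N]
    exact hP _
  · calc dInfty z.val w.val ≤ 1 / ((k + N : ℕ) + 2 : ℝ) :=
          dInfty_le_of_forall_le_eq fun i hi => InvLim.eq_of_apply_eq (P.injective hzw) hi
      _ ≤ 1 / (N + 1 : ℝ) := one_div_le_one_div_of_le (by positivity) (by push_cast; linarith)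
      _ < δ := hN

variable [CompactSpace (InvLim F)]

lemma subset_closure_homeoProjMaps_inter_deltaMaps
    (hF : ∀ ε > 0, ∃ G ∈ S, ∀ p, dist (G p) (F p) < ε) {δ : ℝ} (hδ : 0 < δ) :
    homeoProjMaps F S ⊆ closure (homeoProjMaps F S ∩ deltaMaps (InvLim F) Z δ) := by
  rintro β ⟨H, k, hH, hβ⟩
  refine Metric.mem_closure_iff.2 fun ε hε => ?_
  obtain ⟨P, hPS, m, hPβ, hPδ⟩ := exists_mem_dist_lt_and_dInfty_lt hF hH k hε hδ
  let γ : C(InvLim F, Z) := ⟨fun z => P (z.val m),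
    P.continuous.comp ((continuous_apply m).comp continuous_subtype_val)⟩
  refine ⟨γ, ⟨⟨P, m, hPS, fun z => rfl⟩, hPδ⟩, ?_⟩
  rw [dist_comm, ContinuousMap.dist_lt_iff hε]
  intro z
  rw [hβ]
  exact hPβ z

lemma dense_deltaMaps_closure_homeoProjMaps
    (hF : ∀ ε > 0, ∃ G ∈ S, ∀ p, dist (G p) (F p) < ε) {δ : ℝ} (hδ : 0 < δ) :
    Dense {α : closure (homeoProjMaps F S) | α.1 ∈ deltaMaps (InvLim F) Z δ} :=
  dense_setOf_mem_of_subset_closure_inter (subset_closure_homeoProjMaps_inter_deltaMaps hF hδ)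

lemma dense_injective_closure_homeoProjMaps
    (hF : ∀ ε > 0, ∃ G ∈ S, ∀ p, dist (G p) (F p) < ε) :
    Dense {α : closure (homeoProjMaps F S) | Function.Injective α.1} := by
  have : CompleteSpace (closure (homeoProjMaps F S)) := isClosed_closure.completeSpace_coe
  have hδ (n : ℕ) : 0 < 1 / (n + 1 : ℝ) := Nat.one_div_pos_of_nat
  refine (dense_iInter_of_isOpen (fun n => (isOpen_deltaMaps _).preimage continuous_subtype_val)
    fun n => dense_deltaMaps_closure_homeoProjMaps hF (hδ n)).mono fun α hα => ?_
  rw [mem_iInter] at hα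
  exact injective_of_forall_mem_deltaMaps hα

end Approximation

section Slices

variable {X I : Type*}

def sliceHomeos (X I : Type*) [TopologicalSpace X] [TopologicalSpace I] :
    Subsemigroup ((X × I) ≃ₜ (X × I)) where
  carrier := {H | ∀ p, (H p).2 = p.2}
  mul_mem' hG hP p := (hG _).trans (hP p)

lemma image_univ_prod_singleton_of_snd_eq {H : X × I → X × I} (hsurj : Function.Surjective H)
    (hH : ∀ p, (H p).2 = p.2) (t : I) : H '' (univ ×ˢ {t}) = univ ×ˢ {t} := by
  have hpre : H ⁻¹' (univ ×ˢ {t}) = univ ×ˢ {t} := by ext p; simp [hH]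
  calc H '' (univ ×ˢ {t}) = H '' (H ⁻¹' (univ ×ˢ {t})) := by rw [hpre]
    _ = univ ×ˢ {t} := image_preimage_eq _ hsurj

lemma image_range_iota_eq {f : X × I → X} {t : I}
    (hsurj : Function.Surjective fun x => f (x, t)) {H : X × I → X × I}
    (hHsurj : Function.Surjective H) (hH : ∀ p, (H p).2 = p.2) (k : ℕ)
    {β : InvLim (fun p : X × I => (f p, p.2)) → X × I} (hβ : ∀ z, β z = H (z.val k)) :
    β '' range (iota f t) = univ ×ˢ {t} := by
  have hproj : range (fun x : InvLim (fun x => f (x, t)) => (x.val k, t)) = univ ×ˢ {t} := by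
    ext ⟨a, s⟩
    simp only [mem_range, Prod.mk.injEq, mem_prod, mem_univ, mem_singleton_iff, true_and]
    constructor
    · rintro ⟨x, -, rfl⟩
      rfl
    · rintro rfl
      exact (InvLim.surjective_eval hsurj k a).imp fun x hx => ⟨hx, rfl⟩
  have hβι : β ∘ iota f t = H ∘ fun x => (x.val k, t) := funext fun x => hβ _
  rw [← range_comp, hβι, range_comp, hproj, image_univ_prod_singleton_of_snd_eq hHsurj hH]

variable [TopologicalSpace X] [TopologicalSpace I]

lemma continuous_iota (f : X × I → X) (t : I) : Continuous (iota f t) :=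
  (continuous_pi fun i =>
    ((continuous_apply i).comp continuous_subtype_val).prodMk continuous_const).subtype_mk _

lemma range_comp_iota_eq_of_mem_closure [CompactSpace X] [T2Space X] [T1Space I]
    {f : X × I → X} (hf : Continuous f) {t : I} (hsurj : Function.Surjective fun x => f (x, t))
    {α : C(InvLim (fun p : X × I => (f p, p.2)), X × I)}
    (hα : α ∈ closure (homeoProjMaps _ (sliceHomeos X I))) :
    range (fun x => α (iota f t x)) = univ ×ˢ {t} := by
  have := InvLim.compactSpace (g := fun x => f (x, t)) (by fun_prop)
  exact (range_comp α (iota f t)).trans <|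
    ContinuousMap.image_eq_of_mem_closure hα (isCompact_range (continuous_iota f t))
      (isClosed_univ.prod isClosed_singleton) fun β ⟨H, k, hH, hβ⟩ =>
        image_range_iota_eq hsurj H.surjective hH k hβ

end Slices

section NearIsotopy

variable {X I : Type*} [MetricSpace X] [MetricSpace I]

def IsNearIsotopy (f : X × I → X) : Prop :=
  ∀ ε > (0 : ℝ), ∃ h : I → X ≃ₜ X,
    Continuous (fun p : X × I => h p.2 p.1) ∧ ∀ p : X × I, dist (h p.2 p.1) (f p) < ε

lemma IsNearIsotopy.surjective_slice [CompactSpace X] {f : X × I → X} (hfi : IsNearIsotopy f)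
    (hf : Continuous f) (t : I) : Function.Surjective fun x => f (x, t) :=
  surjective_of_forall_dist_lt (hf.comp (Continuous.prodMk_left t)) fun ε hε =>
    let ⟨h, _, hh⟩ := hfi ε hε
    ⟨h t, (h t).surjective, fun x => hh (x, t)⟩

lemma IsNearIsotopy.exists_mem_sliceHomeos_dist_lt [CompactSpace X] [CompactSpace I]
    {f : X × I → X} (hfi : IsNearIsotopy f) {ε : ℝ} (hε : 0 < ε) :
    ∃ G ∈ sliceHomeos X I, ∀ p, dist (G p) (f p, p.2) < ε := by
  obtain ⟨h, hc, hd⟩ := hfi ε hε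
  let e : (X × I) ≃ (X × I) :=
    { toFun := fun p => (h p.2 p.1, p.2)
      invFun := fun p => ((h p.2).symm p.1, p.2)
      left_inv := fun p => by simp
      right_inv := fun p => by simp }
  have hce : Continuous e := hc.prodMk continuous_snd
  refine ⟨hce.homeoOfEquivCompactToT2, fun p => rfl, fun p => ?_⟩
  change dist ((h p.2 p.1, p.2) : X × I) (f p, p.2) < ε
  simpa [Prod.dist_eq, hε] using hd p

end NearIsotopy

/-- Ancel-style structure of the closure `F̄` of `E = {H ∘ π_k : H` a slice-preserving
homeomorphism of `Z = X×I`, `k ∈ ℕ}` in `C(lim(Z,F), Z)`: every element of `F̄` is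
surjective and maps `ι_t(lim(X,f_t))` onto `X×{t}`; for every `δ > 0` the `δ`-maps in
`F̄` form an open dense subset of `F̄`; and the injective maps are dense in `F̄`. -/
theorem closure_of_E_structure {X I : Type*}
    [MetricSpace X] [CompactSpace X] [MetricSpace I] [CompactSpace I]
    (f : X × I → X) (hf : Continuous f)
    (hNI : ∀ ε > (0 : ℝ), ∃ h : I → X ≃ₜ X,
        Continuous (fun p : X × I => h p.2 p.1) ∧
        ∀ p : X × I, dist (h p.2 p.1) (f p) < ε)
    (𝓕 : Set C(InvLim (fun p : X × I => (f p, p.2)), X × I))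
    (h𝓕 : 𝓕 = closure {α : C(InvLim (fun p : X × I => (f p, p.2)), X × I) |
        ∃ (H : (X × I) ≃ₜ (X × I)) (k : ℕ),
          (∀ p : X × I, (H p).2 = p.2) ∧
          ∀ z : InvLim (fun p : X × I => (f p, p.2)), α z = H (z.val k)}) :
    (∀ α ∈ 𝓕, Function.Surjective ⇑α ∧
        ∀ t : I, Set.range (fun x : InvLim (fun x => f (x, t)) => α (iota f t x))
          = Set.univ ×ˢ ({t} : Set I)) ∧
    (∀ δ > (0 : ℝ),
        IsOpen {α : 𝓕 | ∀ z w : InvLim (fun p : X × I => (f p, p.2)),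
            α.val z = α.val w → dInfty z.val w.val < δ} ∧
        Dense {α : 𝓕 | ∀ z w : InvLim (fun p : X × I => (f p, p.2)),
            α.val z = α.val w → dInfty z.val w.val < δ}) ∧
    Dense {α : 𝓕 | Function.Injective ⇑α.val} := by
  have hNI : IsNearIsotopy f := hNI
  obtain rfl : 𝓕 = closure (homeoProjMaps _ (sliceHomeos X I)) := h𝓕
  have := InvLim.compactSpace (hf.prodMk continuous_snd)
  have happrox (ε : ℝ) (hε : 0 < ε) := hNI.exists_mem_sliceHomeos_dist_lt hε
  refine ⟨fun α hα => ?_, fun δ hδ => ⟨(isOpen_deltaMaps δ).preimage continuous_subtype_val,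
    dense_deltaMaps_closure_homeoProjMaps happrox hδ⟩,
    dense_injective_closure_homeoProjMaps happrox⟩
  have hslice (t : I) := range_comp_iota_eq_of_mem_closure hf (hNI.surjective_slice hf t) hα
  refine ⟨fun p => ?_, hslice⟩
  obtain ⟨x, hx⟩ : p ∈ range fun x => α (iota f p.2 x) := by
    rw [hslice]
    exact ⟨mem_univ _, rfl⟩
  exact ⟨_, hx⟩
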